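/- arXiv:1912.01280 — 2 statements merged into one kernel-verified Lean document; each statement's English description precedes it below -/
import Mathlib

section
/- Let Y ~ N(μ,σ²) with density f, and let μ_n := E[T_n(Y)·1_{[−1,1]}(Y)] and μ'_n := E[T'_n(Y)·1_{[−1,1]}(Y)] be the truncated generalized Chebyshev moments. Then for n ≥ 1, E[Y·T_n(Y)·1_{[−1,1]}(Y)] = μ·μ_n − σ²·(T_n(1)f(1) − T_n(−1)f(−1) − μ'_n). -/
/-!
The normal density satisfies Stein's identity `x f(x) = m f(x) - σ² f'(x)`. Multiplying by `T_n`
and integrating over `[-1, 1]`, the `f'` term is integrated by parts, which produces the boundary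
values `T_n(±1) f(±1)` and the moment of `T_n'`.
-/

open Real MeasureTheory Polynomial

theorem intervalIntegral_mul_mul_eq_of_stein {f f' g g' : ℝ → ℝ} {m s a b : ℝ}
    (hf : ∀ x, HasDerivAt f (f' x) x) (hf' : Continuous f')
    (hg : ∀ x, HasDerivAt g (g' x) x) (hg' : Continuous g')
    (hstein : ∀ x, x * f x = m * f x - s * f' x) :
    ∫ x in a..b, x * g x * f x =
      m * (∫ x in a..b, g x * f x) - s * (g b * f b - g a * f a - ∫ x in a..b, g' x * f x) := by
  have hfc : Continuous f := continuous_iff_continuousAt.2 fun x => (hf x).continuousAt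
  have hgc : Continuous g := continuous_iff_continuousAt.2 fun x => (hg x).continuousAt
  have hparts : ∫ x in a..b, g x * f' x = g b * f b - g a * f a - ∫ x in a..b, g' x * f x :=
    intervalIntegral.integral_mul_deriv_eq_deriv_mul (fun x _ => hg x) (fun x _ => hf x)
      (hg'.intervalIntegrable _ _) (hf'.intervalIntegrable _ _)
  calc ∫ x in a..b, x * g x * f x
      = ∫ x in a..b, m * (g x * f x) - s * (g x * f' x) :=
        intervalIntegral.integral_congr fun x _ => by
          linear_combination g x * hstein x
    _ = m * (∫ x in a..b, g x * f x) - s * ∫ x in a..b, g x * f' x := by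
        rw [intervalIntegral.integral_sub
            ((by fun_prop : Continuous fun x => m * (g x * f x)).intervalIntegrable _ _)
            ((by fun_prop : Continuous fun x => s * (g x * f' x)).intervalIntegrable _ _),
          intervalIntegral.integral_const_mul, intervalIntegral.integral_const_mul]
    _ = _ := by rw [hparts]

theorem hasDerivAt_const_mul_exp_neg_sq_div (c m σ x : ℝ) :
    HasDerivAt (fun x => c * exp (-(x - m) ^ 2 / (2 * σ ^ 2)))
      (c * exp (-(x - m) ^ 2 / (2 * σ ^ 2)) * ((m - x) / σ ^ 2)) x := by
  have hexponent : HasDerivAt (fun x => -(x - m) ^ 2 / (2 * σ ^ 2)) ((m - x) / σ ^ 2) x := by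
    refine (((hasDerivAt_id x).sub_const m).pow 2).neg.div_const (2 * σ ^ 2) |>.congr_deriv ?_
    simp only [id, Nat.cast_ofNat]
    ring
  exact (hexponent.exp.const_mul c).congr_deriv (mul_assoc _ _ _).symm

theorem mul_const_mul_exp_neg_sq_div_eq {σ : ℝ} (hσ : σ ≠ 0) (c m x : ℝ) :
    x * (c * exp (-(x - m) ^ 2 / (2 * σ ^ 2))) =
      m * (c * exp (-(x - m) ^ 2 / (2 * σ ^ 2))) -
        σ ^ 2 * (c * exp (-(x - m) ^ 2 / (2 * σ ^ 2)) * ((m - x) / σ ^ 2)) := by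
  field_simp
  ring

theorem normal_truncated_chebyshev_moment_identity_general (m σ : ℝ) (hσ : 0 < σ) (f : ℝ → ℝ)
    (hf : ∀ x, f x = (Real.sqrt (2 * π) * σ)⁻¹ * Real.exp (-(x - m) ^ 2 / (2 * σ ^ 2)))
    (n : ℕ)
    (μn μn' : ℝ)
    (hμn : μn = ∫ x in Set.Icc (-1 : ℝ) 1, (Polynomial.Chebyshev.T ℝ n).eval x * f x)
    (hμn' : μn' = ∫ x in Set.Icc (-1 : ℝ) 1,
        (Polynomial.derivative (Polynomial.Chebyshev.T ℝ n)).eval x * f x) :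
    (∫ x in Set.Icc (-1 : ℝ) 1, x * (Polynomial.Chebyshev.T ℝ n).eval x * f x) =
      m * μn - σ ^ 2 * ((Polynomial.Chebyshev.T ℝ n).eval 1 * f 1 -
        (Polynomial.Chebyshev.T ℝ n).eval (-1) * f (-1) - μn') := by
  obtain rfl : f = _ := funext hf
  simp only [hμn, hμn', integral_Icc_eq_integral_Ioc,
    ← intervalIntegral.integral_of_le (show (-1 : ℝ) ≤ 1 by norm_num)]
  exact intervalIntegral_mul_mul_eq_of_stein
    (hasDerivAt_const_mul_exp_neg_sq_div _ m σ) (by fun_prop)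
    (Chebyshev.T ℝ n).hasDerivAt (derivative _).continuous
    (mul_const_mul_exp_neg_sq_div_eq hσ.ne' _ m)

theorem normal_truncated_chebyshev_moment_identity (m σ : ℝ) (hσ : 0 < σ) (f : ℝ → ℝ)
    (hf : ∀ x, f x = (Real.sqrt (2 * π) * σ)⁻¹ * Real.exp (-(x - m) ^ 2 / (2 * σ ^ 2)))
    (n : ℕ) (hn : 1 ≤ n)
    (μn μn' : ℝ)
    (hμn : μn = ∫ x in Set.Icc (-1 : ℝ) 1, (Polynomial.Chebyshev.T ℝ n).eval x * f x)
    (hμn' : μn' = ∫ x in Set.Icc (-1 : ℝ) 1,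
        (Polynomial.derivative (Polynomial.Chebyshev.T ℝ n)).eval x * f x) :
    (∫ x in Set.Icc (-1 : ℝ) 1, x * (Polynomial.Chebyshev.T ℝ n).eval x * f x) =
      m * μn - σ ^ 2 * ((Polynomial.Chebyshev.T ℝ n).eval 1 * f 1 -
        (Polynomial.Chebyshev.T ℝ n).eval (-1) * f (-1) - μn') :=
  normal_truncated_chebyshev_moment_identity_general m σ hσ f hf n μn μn' hμn hμn'
end

section
/- Let Y ~ N(μ,σ²) with density f and distribution function F. The truncated generalized moments μ_n := E[T_n(Y)·1_{[−1,1]}(Y)] satisfy, for n ≥ 1, the recursion μ_{n+1} = 2μ·μ_n − 2σ²·( f(1) − f(−1)·T_n(−1) − 2n·Σ'_{j=0}^{n−1} μ_j·1_{(n+j) mod 2 = 1} ) − μ_{n−1}, with starting values μ_0 = F(1)−F(−1) and μ_1 = μ·μ_0 − σ²·(f(1)−f(−1)), where Σ' indicates the j=0 term is multiplied by 1/2. -/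
open Real MeasureTheory Polynomial Finset

/-!
The Gaussian density satisfies Stein's identity `x f(x) = m f(x) - σ² f'(x)`. Integrating it
against `T_n` over `[-1, 1]` and integrating by parts expresses `∫ x T_n(x) f(x)` through the
boundary values of `T_n f` and `∫ T_n' f`; since `T_n' = n U_{n-1}` and
`U_{n-1} = Σ' 2 T_j` over the `j < n` with `n + j` odd, the last integral is a combination of the
lower moments. The three-term recurrence `T_{n+1} = 2 x T_n - T_{n-1}` then gives the recursion.
-/

namespace Polynomial.Chebyshev

variable (R : Type*) [CommRing R]

theorem U_eq_sum_T (k : ℕ) :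
    U R k = ∑ j ∈ range (k + 1),
      (if (k + j) % 2 = 0 then (if j = 0 then 1 else 2) else 0 : R) • T R j := by
  induction k using Nat.twoStepInduction with
  | zero => simp
  | one => simp [sum_range_succ, two_mul, two_smul]
  | more k ih _ =>
    have hk : ((k + 2 : ℕ) : ℤ) = k + 2 := by push_cast; ring
    have hshift : ∀ j ∈ range (k + 1), (k + 2 + j) % 2 = (k + j) % 2 := by
      intro j _; omega
    have h1 : (k + 2 + (k + 1)) % 2 = 1 := by omega
    have h2 : (k + 2 + (k + 2)) % 2 = 0 := by omega
    rw [hk, U_eq_two_mul_T_add_U, ih, sum_range_succ _ (k + 2), sum_range_succ _ (k + 1),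
      sum_congr rfl fun j hj => by rw [← hshift j hj], h1, h2]
    push_cast
    rw [zero_smul, add_zero, add_comm, two_smul, two_mul]

theorem T_derivative_eq_sum_T (n : ℕ) :
    derivative (T R n) = ∑ j ∈ range n,
      (n * if (n + j) % 2 = 1 then (if j = 0 then 1 else 2) else 0 : R) • T R j := by
  cases n with
  | zero => simp
  | succ k =>
    rw [T_derivative_eq_U, show ((k + 1 : ℕ) : ℤ) - 1 = k by push_cast; ring, U_eq_sum_T,
      mul_sum]
    refine sum_congr rfl fun j _ => ?_
    have hpar : ((k + 1 + j) % 2 = 1) ↔ ((k + j) % 2 = 0) := by omega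
    simp [hpar, mul_smul, smul_eq_C_mul]

end Polynomial.Chebyshev

noncomputable def intervalMoment (f : ℝ → ℝ) (a b : ℝ)
    (hf : IntervalIntegrable f volume a b) : ℝ[X] →ₗ[ℝ] ℝ where
  toFun p := ∫ x in a..b, p.eval x * f x
  map_add' p q := by
    simp only [eval_add, add_mul]
    exact intervalIntegral.integral_add (hf.continuousOn_mul p.continuousOn)
      (hf.continuousOn_mul q.continuousOn)
  map_smul' c p := by
    simp only [eval_smul, smul_eq_mul, mul_assoc, intervalIntegral.integral_const_mul,
      RingHom.id_apply]

theorem intervalMoment_apply (f : ℝ → ℝ) (a b : ℝ) (hf : IntervalIntegrable f volume a b)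
    (p : ℝ[X]) : intervalMoment f a b hf p = ∫ x in a..b, p.eval x * f x := rfl

theorem intervalMoment_X_mul_of_hasDerivAt {f : ℝ → ℝ} {m s : ℝ} (hs : s ≠ 0)
    (hf : ∀ x, HasDerivAt f ((m - x) / s * f x) x) (a b : ℝ)
    (hfi : IntervalIntegrable f volume a b) (p : ℝ[X]) :
    intervalMoment f a b hfi (X * p) = m * intervalMoment f a b hfi p -
      s * (p.eval b * f b - p.eval a * f a - intervalMoment f a b hfi (derivative p)) := by
  have hfc : Continuous f := continuous_iff_continuousAt.2 fun x => (hf x).continuousAt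
  have hf'c : Continuous fun x => (m - x) / s * f x := by fun_prop
  have hparts := intervalIntegral.integral_mul_deriv_eq_deriv_mul (a := a) (b := b)
    (fun x _ => p.hasDerivAt x) (fun x _ => hf x)
    (p.derivative.continuous.intervalIntegrable _ _) (hf'c.intervalIntegrable _ _)
  have hstein : ∀ x, (X * p).eval x * f x =
      m * (p.eval x * f x) - s * (p.eval x * ((m - x) / s * f x)) := by
    intro x; simp only [eval_mul, eval_X]; field_simp; ring
  simp only [intervalMoment_apply, hstein]
  rw [intervalIntegral.integral_sub, intervalIntegral.integral_const_mul,
    intervalIntegral.integral_const_mul, hparts]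
  · exact (hfi.continuousOn_mul p.continuousOn).const_mul m
  · exact ((p.continuous.mul hf'c).intervalIntegrable _ _).const_mul s

theorem hasDerivAt_gaussian (c m s x : ℝ) :
    HasDerivAt (fun x => c * exp (-(x - m) ^ 2 / (2 * s)))
      ((m - x) / s * (c * exp (-(x - m) ^ 2 / (2 * s)))) x := by
  have h := ((((hasDerivAt_id x).sub_const m).pow 2).neg.div_const (2 * s)).exp.const_mul c
  simp only [Pi.pow_apply, Pi.neg_apply, id] at h
  refine h.congr_deriv ?_
  field_simp
  ring

theorem integrable_gaussian (c m : ℝ) {s : ℝ} (hs : 0 < s) :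
    Integrable fun x => c * exp (-(x - m) ^ 2 / (2 * s)) := by
  convert ((integrable_exp_neg_mul_sq (inv_pos.2 (mul_pos two_pos hs))).comp_sub_right m).const_mul
    c using 3
  congr 1
  ring

theorem normal_truncated_chebyshev_moment_recursion (m σ : ℝ) (hσ : 0 < σ)
    (f : ℝ → ℝ) (F : ℝ → ℝ)
    (hf : ∀ x, f x = (Real.sqrt (2 * π) * σ)⁻¹ * Real.exp (-(x - m) ^ 2 / (2 * σ ^ 2)))
    (hF : ∀ x, F x = ∫ t in Set.Iic x, f t)
    (μc : ℕ → ℝ)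
    (hμc : ∀ j, μc j = ∫ x in Set.Icc (-1 : ℝ) 1, (Polynomial.Chebyshev.T ℝ j).eval x * f x) :
    μc 0 = F 1 - F (-1) ∧
    μc 1 = m * μc 0 - σ ^ 2 * (f 1 - f (-1)) ∧
    ∀ n : ℕ, 1 ≤ n →
      μc (n + 1) = 2 * m * μc n -
        2 * σ ^ 2 * (f 1 - f (-1) * (Polynomial.Chebyshev.T ℝ n).eval (-1) -
          2 * (n : ℝ) * ∑ j ∈ Finset.range n,
            (if j = 0 then (1 : ℝ) / 2 else 1) * μc j *
              (if (n + j) % 2 = 1 then (1 : ℝ) else 0)) -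
        μc (n - 1) := by
  have hf_eq : f = fun x => (√(2 * π) * σ)⁻¹ * exp (-(x - m) ^ 2 / (2 * σ ^ 2)) := funext hf
  have hfd : ∀ x, HasDerivAt f ((m - x) / σ ^ 2 * f x) x := hf_eq ▸ hasDerivAt_gaussian _ m _
  have hfi : Integrable f := hf_eq ▸ integrable_gaussian _ m (pow_pos hσ 2)
  have hX_mul := intervalMoment_X_mul_of_hasDerivAt (pow_ne_zero 2 hσ.ne') hfd (-1) 1
    hfi.intervalIntegrable
  set L := intervalMoment f (-1) 1 hfi.intervalIntegrable
  have hμL : ∀ j : ℕ, μc j = L (Chebyshev.T ℝ j) := fun j => by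
    rw [hμc, integral_Icc_eq_integral_Ioc, ← intervalIntegral.integral_of_le (by norm_num)]
    rfl
  have hμ0 : μc 0 = F 1 - F (-1) := by
    rw [hF, hF, intervalIntegral.integral_Iic_sub_Iic hfi.integrableOn hfi.integrableOn, hμL]
    simp [L, intervalMoment_apply]
  refine ⟨hμ0, ?_, fun n hn => ?_⟩
  · rw [hμL, hμL, Nat.cast_one, Chebyshev.T_one, ← mul_one X, hX_mul]
    simp
  · have hweights : ∑ j ∈ range n,
        ((n : ℝ) * if (n + j) % 2 = 1 then (if j = 0 then 1 else 2) else 0) * μc j =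
        2 * n * ∑ j ∈ range n, (if j = 0 then (1 : ℝ) / 2 else 1) * μc j *
          (if (n + j) % 2 = 1 then (1 : ℝ) else 0) := by
      rw [mul_sum]
      refine sum_congr rfl fun j _ => ?_
      split_ifs <;> ring
    obtain ⟨k, rfl⟩ := Nat.exists_eq_add_of_le' hn
    have hT : Chebyshev.T ℝ ↑(k + 1 + 1) =
        (2 : ℝ) • (X * Chebyshev.T ℝ ↑(k + 1)) - Chebyshev.T ℝ k := by
      rw [show ((k + 1 + 1 : ℕ) : ℤ) = k + 2 by push_cast; ring, Chebyshev.T_add_two, two_smul]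
      push_cast
      ring
    rw [hμL, hT, map_sub, map_smul, hX_mul, Chebyshev.T_eval_one,
      Chebyshev.T_derivative_eq_sum_T, map_sum, ← hμL, ← hμL, Nat.add_sub_cancel]
    simp only [map_smul, smul_eq_mul, ← hμL]
    rw [hweights]
    ring
end
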